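/- (Lacasse's identity.) Let U(x) = Σ_{n≥0} n^n x^n/n! as a formal power series over ℚ, with the convention 0^0 = 1. Then U(x)^3 − U(x)^2 = Σ_{n≥0} n^{n+1} x^n/n!. Moreover, both sides equal T(x)/(1−T(x))^3, where T(x) is the tree function, the unique formal power series over ℚ with zero constant term satisfying T = x·exp(T). -/

import Mathlib

open PowerSeries

/-- Composition `φ(f)` of formal power series, which is the correct notion of
substitution of `f` into `φ` whenever `f` has zero constant term. -/
noncomputable def psComp {A : Type*} [CommRing A] (φ f : PowerSeries A) : PowerSeries A :=
  PowerSeries.mk fun m => ∑ n ∈ Finset.range (m + 1), coeff n φ * coeff m (f ^ n)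

/-!
Differentiating `T = x·exp(T)` gives `θT = T/(1 - T)` for `θ = x·d/dx`. This equation, together
with `T = x + O(x²)`, determines `T`, and by Abel's identity
`∑_{i+j=n} C(n+1, i+1) (i+1)^i j^j = (n+1)^(n+1)` the series `C = ∑_{n≥1} n^(n-1) xⁿ/n!`
satisfies it, with `θC = U - 1` and `C·U = U - 1`. Hence `T = C` and `U = 1/(1 - T)`, and
differentiating `U·(1 - T) = 1` gives `θU = U³ - U² = T/(1 - T)³`; the coefficients of `θU`
are `n^(n+1)/n!`.

Abel's identity follows by induction on `n`: as polynomials in `y`, the derivatives of both sides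
are `n + 1` times the previous case at `y + 1`, and both sides vanish at `y = -(n+1)`, the left one
because the `(n+1)`-st finite difference of `kⁿ` is zero.
-/

open Finset

theorem sum_antidiagonal_neg_one_pow_mul_choose_mul_pow {R : Type*} [CommRing R] (n : ℕ) :
    ∑ p ∈ antidiagonal (n + 1),
      (-1 : R) ^ p.2 * (n + 2).choose (p.1 + 1) * ((p.1 + 1 : ℕ) : R) ^ (n + 1) = 0 := by
  have h := congrFun (fwdDiff_iter_pow_eq_zero_of_lt (R := R) (j := n + 1) (n := n + 2)
    (by omega)) 0
  rw [fwdDiff_iter_eq_sum_shift, sum_range_succ', Nat.sum_antidiagonal_eq_sum_range_succ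
    (fun i j => (-1 : R) ^ j * (n + 2).choose (i + 1) * ((i + 1 : ℕ) : R) ^ (n + 1))] at *
  simp only [zero_add, nsmul_eq_mul, mul_one, Nat.cast_zero, zero_pow (Nat.succ_ne_zero n),
    smul_zero, add_zero, Pi.zero_apply] at h
  rw [← h]
  refine sum_congr rfl fun k _ => ?_
  rw [zsmul_eq_mul]
  push_cast
  rfl

namespace Polynomial

variable {R : Type*} [CommRing R]

theorem eq_of_derivative_eq_of_eval_eq [IsAddTorsionFree R] {p q : R[X]}
    (hd : derivative p = derivative q) (a : R) (ha : p.eval a = q.eval a) : p = q := by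
  have hc := eq_C_of_derivative_eq_zero (p := p - q) (by rw [derivative_sub, hd, sub_self])
  have h0 := congrArg (eval a) hc
  rw [eval_C, eval_sub, ha, sub_self] at h0
  rwa [← h0, C_0, sub_eq_zero] at hc

theorem X_add_C_comp_X_add_C (a b : R) : (X + C a).comp (X + C b) = X + C (b + a) := by
  simp [add_assoc]

/-- The left side of Abel's identity `∑_{i+j=n} C(n+1,i+1) (i+1)^i (y+j)^j = (n+1)(y+n+1)^n`,
as a polynomial in `y`. -/
noncomputable def abelSum (R : Type*) [CommRing R] (n : ℕ) : R[X] :=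
  ∑ p ∈ antidiagonal n, C (((n + 1).choose (p.1 + 1) * (p.1 + 1) ^ p.1 : ℕ) : R) *
    (X + C (p.2 : R)) ^ p.2

theorem derivative_abelSum_succ (n : ℕ) :
    derivative (abelSum R (n + 1)) = C ((n + 2 : ℕ) : R) * (abelSum R n).comp (X + C 1) := by
  rw [abelSum, abelSum, Nat.sum_antidiagonal_succ', derivative_add, derivative_sum,
    Polynomial.sum_comp, mul_sum]
  simp only [pow_zero, mul_one, derivative_C, zero_add, derivative_C_mul, derivative_X_add_C_pow,
    mul_comp, C_comp, pow_comp, X_add_C_comp_X_add_C, Nat.add_sub_cancel]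
  refine sum_congr rfl fun p hp => ?_
  rw [HasAntidiagonal.mem_antidiagonal] at hp
  have hchoose : (n + 2).choose (p.1 + 1) * (p.2 + 1) = (n + 2) * (n + 1).choose (p.1 + 1) := by
    rw [mul_comm (n + 2), Nat.choose_mul_succ_eq]; congr 2; omega
  rw [← mul_assoc, ← mul_assoc, ← C_mul, ← C_mul, ← Nat.cast_mul, ← Nat.cast_mul,
    add_comm (1 : R), ← Nat.cast_add_one, mul_right_comm, hchoose, mul_assoc]

theorem eval_abelSum_succ_neg (n : ℕ) : (abelSum R (n + 1)).eval (-((n + 2 : ℕ) : R)) = 0 := by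
  rw [abelSum, eval_finsetSum, ← sum_antidiagonal_neg_one_pow_mul_choose_mul_pow (R := R) n]
  refine sum_congr rfl fun p hp => ?_
  rw [HasAntidiagonal.mem_antidiagonal] at hp
  have hshift : -((n + 2 : ℕ) : R) + p.2 = -((p.1 + 1 : ℕ) : R) := by
    rw [show n + 2 = p.1 + 1 + p.2 by omega]; push_cast; ring
  rw [eval_mul, eval_C, eval_pow, eval_add, eval_X, eval_C, hshift, neg_pow, ← hp, pow_add, hp]
  push_cast
  ring

theorem abelSum_eq [IsAddTorsionFree R] (n : ℕ) :
    abelSum R n = C ((n + 1 : ℕ) : R) * (X + C ((n + 1 : ℕ) : R)) ^ n := by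
  induction n with
  | zero => simp [abelSum]
  | succ n ih =>
    refine eq_of_derivative_eq_of_eval_eq ?_ (-((n + 2 : ℕ) : R)) ?_
    · rw [derivative_abelSum_succ, ih, derivative_C_mul, derivative_X_add_C_pow, mul_comp,
        C_comp, pow_comp, X_add_C_comp_X_add_C, Nat.add_sub_cancel, ← mul_assoc, ← mul_assoc,
        ← C_mul, add_comm (1 : R), ← Nat.cast_add_one]
    · rw [eval_abelSum_succ_neg, eval_mul, eval_pow, eval_add, eval_X, eval_C, neg_add_cancel,
        zero_pow n.succ_ne_zero, mul_zero]

theorem _root_.Nat.sum_antidiagonal_choose_succ_mul_pow_mul_pow (n : ℕ) :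
    ∑ p ∈ antidiagonal n, (n + 1).choose (p.1 + 1) * (p.1 + 1) ^ p.1 * p.2 ^ p.2 =
      (n + 1) ^ (n + 1) := by
  apply Nat.cast_injective (R := ℤ)
  have h := congrArg (eval 0) (abelSum_eq (R := ℤ) n)
  simp only [abelSum, eval_finsetSum, eval_mul, eval_pow, eval_add, eval_X, eval_C,
    zero_add] at h
  push_cast at h ⊢
  rw [h]
  ring

end Polynomial

theorem PowerSeries.coeff_pow_eq_zero_of_lt {A : Type*} [CommRing A] {f : A⟦X⟧}
    (hf : constantCoeff f = 0) {m n : ℕ} (h : m < n) : coeff m (f ^ n) = 0 :=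
  X_pow_dvd_iff.mp (pow_dvd_pow_of_dvd (X_dvd_iff.mpr hf) n) m h

theorem psComp_eq_subst {A : Type*} [CommRing A] (φ : A⟦X⟧) {f : A⟦X⟧}
    (hf : constantCoeff f = 0) : psComp φ f = φ.subst f := by
  ext m
  rw [psComp, coeff_mk, coeff_subst' (HasSubst.of_constantCoeff_zero' hf),
    finsum_eq_sum_of_support_subset (s := range (m + 1))]
  · simp only [smul_eq_mul]
  · intro n hn
    by_contra hmn
    rw [coe_range, Set.mem_Iio, not_lt] at hmn
    exact hn (by simp only [coeff_pow_eq_zero_of_lt hf (show m < n by omega), smul_zero])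

theorem PowerSeries.X_mul_derivative_X_pow_mul {R : Type*} [CommRing R] (k : ℕ) (f : R⟦X⟧) :
    X * d⁄dX R (X ^ k * f) = X ^ k * ((k : R⟦X⟧) * f + X * d⁄dX R f) := by
  rw [Derivation.leibniz, Derivation.leibniz_pow, derivative_X, smul_eq_mul, smul_eq_mul,
    nsmul_eq_mul]
  cases k with
  | zero => simp
  | succ k => rw [Nat.add_sub_cancel]; ring

theorem eq_of_X_mul_derivative_eq_add_mul {K : Type*} [Field K] [CharZero K] {S T : K⟦X⟧}
    (hS0 : constantCoeff S = 0) (hT0 : constantCoeff T = 0) (h1 : coeff 1 S = coeff 1 T)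
    (hS : X * d⁄dX K S = S + S * (X * d⁄dX K S))
    (hT : X * d⁄dX K T = T + T * (X * d⁄dX K T)) : S = T := by
  by_contra hne
  set D := S - T with hD
  set k := D.order.toNat
  set E := D.divXPowOrder
  have hDE : D = X ^ k * E := X_pow_order_mul_divXPowOrder.symm
  have hE0 : constantCoeff E ≠ 0 := by
    rw [Ne, constantCoeff_divXPowOrder_eq_zero_iff]; exact sub_ne_zero.mpr hne
  have hD01 : ∀ i < 2, coeff i D = 0 := by
    intro i hi
    interval_cases i <;> simp [hD, hS0, hT0, h1]
  have hk : 2 ≤ k := by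
    by_contra! hk
    exact hE0 (by rw [constantCoeff_divXPowOrder]; exact hD01 k hk)
  -- `D = Xᵏ·E` solves the linearised equation, whose `Xᵏ`-coefficient reads `k·E(0) = E(0)`.
  have hlin : X * d⁄dX K D * (1 - S) = D * (1 + X * d⁄dX K T) := by
    rw [hD, map_sub]; linear_combination hS - hT
  rw [hDE, X_mul_derivative_X_pow_mul, mul_assoc, mul_assoc] at hlin
  have h0 := congrArg constantCoeff (X_pow_mul_cancel hlin)
  simp only [map_mul, map_add, map_sub, map_one, map_natCast, constantCoeff_X, hS0] at h0
  have hk1 : (k : K) - 1 ≠ 0 := by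
    rw [sub_ne_zero]; exact_mod_cast (by omega : k ≠ 1)
  exact hE0 ((mul_eq_zero.mp (by linear_combination h0)).resolve_left hk1)

section TreeFunction

variable {T : ℚ⟦X⟧} (hT : T = X * psComp (exp ℚ) T)
include hT

theorem constantCoeff_eq_zero_of_eq_X_mul_exp : constantCoeff T = 0 := by
  rw [hT, map_mul, constantCoeff_X, zero_mul]

theorem coeff_one_eq_one_of_eq_X_mul_exp : coeff 1 T = 1 := by
  rw [hT, coeff_succ_X_mul, psComp, coeff_mk]
  simp

theorem X_mul_derivative_eq_add_mul_of_eq_X_mul_exp :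
    X * d⁄dX ℚ T = T + T * (X * d⁄dX ℚ T) := by
  have hT0 := constantCoeff_eq_zero_of_eq_X_mul_exp hT
  rw [psComp_eq_subst _ hT0] at hT
  have hE : d⁄dX ℚ ((exp ℚ).subst T) = (exp ℚ).subst T * d⁄dX ℚ T := by
    rw [derivative_subst (HasSubst.of_constantCoeff_zero' hT0), derivative_exp]
  have hT' : d⁄dX ℚ T = (exp ℚ).subst T + T * d⁄dX ℚ T := by
    conv_lhs => rw [hT]
    rw [Derivation.leibniz, hE, derivative_X, smul_eq_mul, smul_eq_mul]
    linear_combination -(d⁄dX ℚ T) * hT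
  linear_combination X * hT' - hT

end TreeFunction

noncomputable def selfPowSeries : ℚ⟦X⟧ := PowerSeries.mk fun n => (n : ℚ) ^ n / n.factorial

-- `∑_{n≥1} n^(n-1) xⁿ/n!`, shifted by `X` so that no `0^(0-1) = 1` enters the constant term.
noncomputable def cayleySeries : ℚ⟦X⟧ :=
  X * PowerSeries.mk fun n => ((n + 1 : ℕ) : ℚ) ^ n / (n + 1).factorial

theorem X_mul_derivative_cayleySeries : X * d⁄dX ℚ cayleySeries = selfPowSeries - 1 := by
  ext n
  cases n with
  | zero => simp [selfPowSeries]
  | succ n =>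
    rw [coeff_succ_X_mul, coeff_derivative, cayleySeries, coeff_succ_X_mul, coeff_mk, map_sub,
      coeff_one, if_neg n.succ_ne_zero, sub_zero, selfPowSeries, coeff_mk]
    push_cast
    ring

theorem cayleySeries_mul_selfPowSeries : cayleySeries * selfPowSeries = selfPowSeries - 1 := by
  ext n
  cases n with
  | zero => simp [selfPowSeries, cayleySeries]
  | succ n =>
    rw [cayleySeries, mul_assoc, coeff_succ_X_mul, coeff_mul, map_sub, coeff_one,
      if_neg n.succ_ne_zero, sub_zero, selfPowSeries, coeff_mk]
    have h : ∑ p ∈ antidiagonal n,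
        ((n + 1).choose (p.1 + 1) : ℚ) * ((p.1 + 1 : ℕ) : ℚ) ^ p.1 * (p.2 : ℚ) ^ p.2 =
          ((n + 1 : ℕ) : ℚ) ^ (n + 1) := by
      exact_mod_cast Nat.sum_antidiagonal_choose_succ_mul_pow_mul_pow n
    rw [← h, sum_div]
    refine sum_congr rfl fun p hp => ?_
    rw [HasAntidiagonal.mem_antidiagonal] at hp
    rw [coeff_mk, coeff_mk, show n + 1 = p.1 + 1 + p.2 by omega, Nat.cast_add_choose]
    field_simp

theorem X_mul_derivative_cayleySeries_eq_add_mul :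
    X * d⁄dX ℚ cayleySeries = cayleySeries + cayleySeries * (X * d⁄dX ℚ cayleySeries) := by
  linear_combination (1 - cayleySeries) * X_mul_derivative_cayleySeries -
    cayleySeries_mul_selfPowSeries

theorem eq_cayleySeries_of_eq_X_mul_exp {T : ℚ⟦X⟧} (hT : T = X * psComp (exp ℚ) T) :
    T = cayleySeries :=
  eq_of_X_mul_derivative_eq_add_mul (constantCoeff_eq_zero_of_eq_X_mul_exp hT)
    (by simp [cayleySeries])
    (by rw [coeff_one_eq_one_of_eq_X_mul_exp hT]; simp [cayleySeries])
    (X_mul_derivative_eq_add_mul_of_eq_X_mul_exp hT) X_mul_derivative_cayleySeries_eq_add_mul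

theorem selfPowSeries_mul_one_sub_cayleySeries : selfPowSeries * (1 - cayleySeries) = 1 := by
  linear_combination -cayleySeries_mul_selfPowSeries

theorem X_mul_derivative_selfPowSeries :
    X * d⁄dX ℚ selfPowSeries = PowerSeries.mk fun n => (n : ℚ) ^ (n + 1) / n.factorial := by
  ext n
  cases n with
  | zero => simp
  | succ n =>
    rw [coeff_succ_X_mul, coeff_derivative, selfPowSeries, coeff_mk, coeff_mk, Nat.factorial_succ]
    push_cast
    field_simp
    ring

theorem selfPowSeries_pow_three_sub_pow_two :
    selfPowSeries ^ 3 - selfPowSeries ^ 2 = X * d⁄dX ℚ selfPowSeries := by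
  have hD := congrArg (d⁄dX ℚ) selfPowSeries_mul_one_sub_cayleySeries
  rw [Derivation.leibniz, map_sub, Derivation.map_one_eq_zero, smul_eq_mul, smul_eq_mul] at hD
  linear_combination (X * d⁄dX ℚ selfPowSeries) * selfPowSeries_mul_one_sub_cayleySeries -
    (X * selfPowSeries) * hD - selfPowSeries ^ 2 * X_mul_derivative_cayleySeries

theorem lacasse_identity_general (U T : PowerSeries ℚ)
    (hU : U = PowerSeries.mk fun n => (n : ℚ) ^ n / (n.factorial : ℚ))
    (hT : T = X * psComp (PowerSeries.exp ℚ) T) :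
    U ^ 3 - U ^ 2 = (PowerSeries.mk fun n => (n : ℚ) ^ (n + 1) / (n.factorial : ℚ)) ∧
      U ^ 3 - U ^ 2 = T * ((1 - T) ^ 3)⁻¹ := by
  have hU : U = selfPowSeries := hU
  obtain rfl := eq_cayleySeries_of_eq_X_mul_exp hT
  subst hU
  have hinv := selfPowSeries_mul_one_sub_cayleySeries
  have hcube : selfPowSeries ^ 3 = ((1 - cayleySeries) ^ 3)⁻¹ := by
    rw [eq_inv_iff_mul_eq_one (by simp [cayleySeries]), ← mul_pow, hinv, one_pow]
  refine ⟨by rw [selfPowSeries_pow_three_sub_pow_two, X_mul_derivative_selfPowSeries], ?_⟩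
  rw [← hcube]
  linear_combination selfPowSeries ^ 2 * hinv

/-- Lacasse's identity: with `U(x) = ∑_{n≥0} nⁿ xⁿ/n!` (and `0⁰ = 1`),
`U³ − U² = ∑_{n≥0} n^{n+1} xⁿ/n!`, and both sides equal `T/(1−T)³` where `T` is the
tree function, the unique power series over `ℚ` with zero constant term satisfying
`T = x·exp(T)`. -/
theorem lacasse_identity (U T : PowerSeries ℚ)
    (hU : U = PowerSeries.mk fun n => (n : ℚ) ^ n / (n.factorial : ℚ))
    (hT0 : constantCoeff T = 0) (hT : T = X * psComp (PowerSeries.exp ℚ) T) :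
    U ^ 3 - U ^ 2 = (PowerSeries.mk fun n => (n : ℚ) ^ (n + 1) / (n.factorial : ℚ)) ∧
      U ^ 3 - U ^ 2 = T * ((1 - T) ^ 3)⁻¹ :=
  lacasse_identity_general U T hU hT
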